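/- There is an absolute constant C such that the following holds (grid-embedded version of Lemma: rearrangement of indistinguishable robots on a path). Let G be the m_1 × m_2 grid graph with m_2 ≥ 2, let r be a row index with 0 ≤ r ≤ m_2 − 2, and write row r for the set of vertices whose second coordinate equals r. For any two subsets S, T of row r with |S| = |T|, there is a sequence of at most C·m_1 valid moves starting from the identity configuration whose final configuration σ satisfies σ(S) = T and σ(v) = v for every vertex v lying outside rows r and r+1. -/

import Mathlib

def Grid2 (m₁ m₂ : ℕ) : SimpleGraph (Fin m₁ × Fin m₂) where
  Adj a b := (((a.1 : ℤ) - (b.1 : ℤ)).natAbs = 1 ∧ a.2 = b.2) ∨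
             (a.1 = b.1 ∧ ((a.2 : ℤ) - (b.2 : ℤ)).natAbs = 1)
  symm := by
    constructor
    rintro a b (⟨h1, h2⟩ | ⟨h1, h2⟩)
    · exact Or.inl ⟨by omega, h2.symm⟩
    · exact Or.inr ⟨h1.symm, by omega⟩
  loopless := by
    constructor
    rintro a (⟨h1, _⟩ | ⟨_, h1⟩) <;> simp at h1

def ValidMove {V : Type*} (G : SimpleGraph V) (X X' : Equiv.Perm V) : Prop :=
  (∀ i, X' i = X i ∨ G.Adj (X i) (X' i)) ∧
  (∀ i j, i ≠ j → X i = X' j → X j ≠ X' i)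

def SolvableIn {V : Type*} (G : SimpleGraph V) (XI XG : Equiv.Perm V) (t : ℕ) : Prop :=
  ∃ Xs : ℕ → Equiv.Perm V, Xs 0 = XI ∧ Xs t = XG ∧
    ∀ s < t, ValidMove G (Xs s) (Xs (s + 1))

/-!
Call a column of row `r` free if it holds no robot of `S`. In one valid move every robot of `S`
whose left neighbour cell is free steps left, while the displaced robots circulate through row
`r + 1`. Under these moves the robots of `S` keep their order and pack into the first `|S|`
columns of row `r` within `m₁` moves: the `i`-th robot from the left, starting in column `s i`,
is delayed only by the `(i - 1)`-st, which is then itself ahead of schedule, so after `τ` moves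
it stands in column `i` or at most `s i + i - τ`. Packing `S`, then running the packing of `T`
backwards, sends `S` onto `T` in `2 m₁` moves.
-/

section Moves

variable {V : Type*} {G : SimpleGraph V} {X Y Z : Equiv.Perm V} {t u : ℕ}

theorem ValidMove.symm (h : ValidMove G X Y) : ValidMove G Y X :=
  ⟨fun i => (h.1 i).imp Eq.symm G.adj_symm, fun i j hij e e' => h.2 j i hij.symm e.symm e'.symm⟩

theorem ValidMove.mul_right (h : ValidMove G X Y) (ρ : Equiv.Perm V) :
    ValidMove G (X * ρ) (Y * ρ) :=
  ⟨fun i => h.1 (ρ i), fun i j hij => h.2 (ρ i) (ρ j) (ρ.injective.ne hij)⟩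

theorem ValidMove.solvableIn (h : ValidMove G X Y) : SolvableIn G X Y 1 :=
  ⟨fun s => if s = 0 then X else Y, rfl, rfl,
    fun s hs => by simpa [Nat.lt_one_iff.mp hs] using h⟩

theorem SolvableIn.refl (X : Equiv.Perm V) : SolvableIn G X X 0 :=
  ⟨fun _ => X, rfl, rfl, fun _ hs => absurd hs (Nat.not_lt_zero _)⟩

theorem SolvableIn.symm (h : SolvableIn G X Y t) : SolvableIn G Y X t := by
  obtain ⟨Xs, h0, ht, hmove⟩ := h
  refine ⟨fun s => Xs (t - s), by simpa using ht, by simpa using h0, fun s hs => ?_⟩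
  have hts : t - s = t - (s + 1) + 1 := by omega
  simpa only [hts] using (hmove (t - (s + 1)) (by omega)).symm

theorem SolvableIn.mul_right (h : SolvableIn G X Y t) (ρ : Equiv.Perm V) :
    SolvableIn G (X * ρ) (Y * ρ) t := by
  obtain ⟨Xs, h0, ht, hmove⟩ := h
  exact ⟨fun s => Xs s * ρ, congrArg (· * ρ) h0, congrArg (· * ρ) ht,
    fun s hs => (hmove s hs).mul_right ρ⟩

theorem SolvableIn.trans (h₁ : SolvableIn G X Y t) (h₂ : SolvableIn G Y Z u) :
    SolvableIn G X Z (t + u) := by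
  obtain ⟨Xs, h0, ht, hmove⟩ := h₁
  obtain ⟨Ys, h0', hu, hmove'⟩ := h₂
  have hlate : ∀ s, t ≤ s → (if s ≤ t then Xs s else Ys (s - t)) = Ys (s - t) := by
    intro s hs
    split_ifs with h
    · rw [show s = t by omega, ht, Nat.sub_self, h0']
    · rfl
  refine ⟨fun s => if s ≤ t then Xs s else Ys (s - t), by simp [h0], ?_, fun s hs => ?_⟩
  · exact (hlate (t + u) (by omega)).trans (by rw [Nat.add_sub_cancel_left, hu])
  · by_cases hst : s < t
    · simpa [hst.le, Nat.succ_le_of_lt hst] using hmove s hst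
    · simp only [hlate s (by omega), hlate (s + 1) (by omega)]
      simpa [Nat.sub_add_comm (not_lt.mp hst)] using hmove' (s - t) (by omega)

end Moves

section RowPairRotation

variable {m₁ m₂ : ℕ} (r : ℕ) (hr : r + 1 < m₂) (A : ℕ → Prop)
  (hA : ∀ c, A c → 0 < c ∧ c < m₁)

open Classical in
/-- The robot of row `r` in each column `c` with `A c` moves left, and the displaced robots
circulate through row `r + 1`: over a maximal run `a, …, b` of such columns, the robots on the
boundary of `{a - 1, …, b} × {r, r + 1}` rotate one place. -/
noncomputable def rowPairRotationFun (v : Fin m₁ × Fin m₂) : Fin m₁ × Fin m₂ :=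
  if (v.2 : ℕ) = r ∧ A v.1 then (⟨v.1 - 1, by omega⟩, v.2)
  else if (v.2 : ℕ) = r ∧ A (v.1 + 1) then (v.1, ⟨r + 1, hr⟩)
  else if h : (v.2 : ℕ) = r + 1 ∧ A (v.1 + 1) then (⟨v.1 + 1, (hA _ h.2).2⟩, v.2)
  else if (v.2 : ℕ) = r + 1 ∧ A v.1 then (v.1, ⟨r, by omega⟩)
  else v

open Classical in
noncomputable def rowPairRotationInvFun (v : Fin m₁ × Fin m₂) : Fin m₁ × Fin m₂ :=
  if h : (v.2 : ℕ) = r ∧ A (v.1 + 1) then (⟨v.1 + 1, (hA _ h.2).2⟩, v.2)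
  else if (v.2 : ℕ) = r ∧ A v.1 then (v.1, ⟨r + 1, hr⟩)
  else if (v.2 : ℕ) = r + 1 ∧ A v.1 then (⟨v.1 - 1, by omega⟩, v.2)
  else if (v.2 : ℕ) = r + 1 ∧ A (v.1 + 1) then (v.1, ⟨r, by omega⟩)
  else v

theorem rowPairRotationFun_adj (v : Fin m₁ × Fin m₂) :
    rowPairRotationFun r hr A hA v = v ∨
      (Grid2 m₁ m₂).Adj v (rowPairRotationFun r hr A hA v) := by
  rcases v with ⟨⟨x, hx⟩, ⟨y, hy⟩⟩
  unfold rowPairRotationFun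
  split_ifs <;> simp_all [Grid2]

theorem rowPairRotationFun_eq_self_of_eq_invFun {v : Fin m₁ × Fin m₂}
    (h : rowPairRotationFun r hr A hA v = rowPairRotationInvFun r hr A hA v) :
    rowPairRotationFun r hr A hA v = v := by
  rcases v with ⟨⟨x, hx⟩, ⟨y, hy⟩⟩
  unfold rowPairRotationFun rowPairRotationInvFun at *
  split_ifs at h ⊢ <;> simp only [Prod.mk.injEq, Fin.mk.injEq] at * <;> omega

theorem rowPairRotationInvFun_rowPairRotationFun :
    Function.LeftInverse (rowPairRotationInvFun r hr A hA) (rowPairRotationFun r hr A hA) := by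
  rintro ⟨⟨x, hx⟩, ⟨y, hy⟩⟩
  have h0 : ¬ A 0 := fun h => (hA 0 h).1.false
  unfold rowPairRotationFun
  dsimp only
  split_ifs <;> unfold rowPairRotationInvFun <;> dsimp only <;> split_ifs <;>
    simp only [Prod.mk.injEq, Fin.mk.injEq] at * <;>
    first | omega | (rcases x with _ | x <;> simp_all)

noncomputable def rowPairRotation : Equiv.Perm (Fin m₁ × Fin m₂) :=
  Equiv.ofBijective (rowPairRotationFun r hr A hA)
    (Finite.injective_iff_bijective.mp
      (rowPairRotationInvFun_rowPairRotationFun r hr A hA).injective)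

theorem rowPairRotation_apply (v : Fin m₁ × Fin m₂) :
    rowPairRotation r hr A hA v = rowPairRotationFun r hr A hA v :=
  rfl

theorem validMove_rowPairRotation : ValidMove (Grid2 m₁ m₂) 1 (rowPairRotation r hr A hA) := by
  refine ⟨rowPairRotationFun_adj r hr A hA, fun a b hab hfb hfa => hab ?_⟩
  simp only [Equiv.Perm.one_apply, rowPairRotation_apply] at hfb hfa
  have hinv : rowPairRotationInvFun r hr A hA b = a := by
    rw [hfa]; exact rowPairRotationInvFun_rowPairRotationFun r hr A hA a
  exact hfb.trans (rowPairRotationFun_eq_self_of_eq_invFun r hr A hA (hfb.symm.trans hinv.symm))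

theorem rowPairRotation_apply_of_ne {v : Fin m₁ × Fin m₂} (h : (v.2 : ℕ) ≠ r)
    (h' : (v.2 : ℕ) ≠ r + 1) : rowPairRotation r hr A hA v = v := by
  simp [rowPairRotation_apply, rowPairRotationFun, h, h']

open Classical in
theorem rowPairRotation_apply_of_row {v : Fin m₁ × Fin m₂} (h : (v.2 : ℕ) = r)
    (h' : ¬ A (v.1 + 1)) :
    ((rowPairRotation r hr A hA v).1 : ℕ) = (if A v.1 then (v.1 : ℕ) - 1 else v.1) ∧
      (rowPairRotation r hr A hA v).2 = v.2 := by
  rw [rowPairRotation_apply, rowPairRotationFun]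
  split_ifs <;> simp_all

end RowPairRotation

theorem add_sub_le_of_strictMono {k : ℕ} {p : Fin k → ℕ} (hp : StrictMono p) {a b : Fin k}
    (hab : a ≤ b) : p a + (b - a) ≤ p b := by
  have hcard := Finset.card_le_card_of_injOn p (s := Finset.Icc a b)
    (t := Finset.Icc (p a) (p b))
    (fun x hx => by
      simp only [Finset.coe_Icc, Set.mem_Icc] at hx ⊢
      exact ⟨hp.monotone hx.1, hp.monotone hx.2⟩)
    hp.injective.injOn
  simp only [Fin.card_Icc, Nat.card_Icc] at hcard
  have : p a ≤ p b := hp.monotone hab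
  have : (a : ℕ) ≤ b := hab
  omega

theorem val_le_of_strictMono {k : ℕ} {p : Fin k → ℕ} (hp : StrictMono p) (i : Fin k) :
    (i : ℕ) ≤ p i := by
  have := add_sub_le_of_strictMono hp (a := ⟨0, i.pos⟩) (b := i) (Nat.zero_le _)
  simp only [Nat.sub_zero] at this
  omega

section Compaction

variable {k : ℕ}

/-- Never holds for `c = 0`, since `0 - 1 = 0` in `ℕ`. -/
def CanShift (p : Fin k → ℕ) (c : ℕ) : Prop :=
  c ∈ Set.range p ∧ c - 1 ∉ Set.range p

open Classical in
noncomputable def shiftStep (p : Fin k → ℕ) (i : Fin k) : ℕ :=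
  if CanShift p (p i) then p i - 1 else p i

noncomputable def shiftIter (s : Fin k → ℕ) (τ : ℕ) : Fin k → ℕ :=
  shiftStep^[τ] s

variable {p s : Fin k → ℕ}

theorem CanShift.pos {c : ℕ} (h : CanShift p c) : 0 < c := by
  obtain ⟨⟨i, rfl⟩, hfree⟩ := h
  exact Nat.pos_of_ne_zero fun h0 => hfree ⟨i, by omega⟩

theorem shiftStep_le (i : Fin k) : shiftStep p i ≤ p i := by
  unfold shiftStep; split_ifs <;> omega

theorem StrictMono.shiftStep (hp : StrictMono p) : StrictMono (shiftStep p) := by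
  intro i j hij
  have hlt := hp hij
  unfold _root_.shiftStep
  split_ifs with hi hj hj
  · have := hi.pos; omega
  · omega
  · have : p i ≠ p j - 1 := fun h => hj.2 ⟨i, h⟩
    omega
  · exact hlt

theorem shiftIter_succ (s : Fin k → ℕ) (τ : ℕ) :
    shiftIter s (τ + 1) = shiftStep (shiftIter s τ) :=
  Function.iterate_succ_apply' _ _ _

theorem StrictMono.shiftIter (hs : StrictMono s) (τ : ℕ) : StrictMono (shiftIter s τ) := by
  induction τ with
  | zero => exact hs
  | succ τ ih => rw [shiftIter_succ]; exact ih.shiftStep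

theorem shiftIter_le (τ : ℕ) (i : Fin k) : shiftIter s τ i ≤ s i := by
  induction τ with
  | zero => rfl
  | succ τ ih => rw [shiftIter_succ]; exact (shiftStep_le i).trans ih

theorem shiftIter_le_or_add_le (hs : StrictMono s) (τ : ℕ) (i : Fin k) :
    shiftIter s τ i ≤ i ∨ shiftIter s τ i + τ ≤ s i + i := by
  induction τ generalizing i with
  | zero => simp [shiftIter]
  | succ τ ih =>
    have hp := hs.shiftIter τ
    rw [shiftIter_succ, shiftStep]
    generalize shiftIter s τ = p at ih hp ⊢
    split_ifs with hmove
    · have := hmove.pos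
      rcases ih i with h | h <;> omega
    · by_cases hhome : p i ≤ i
      · exact Or.inl hhome
      obtain ⟨j, hj⟩ : p i - 1 ∈ Set.range p := by
        by_contra hfree
        exact hmove ⟨⟨i, rfl⟩, hfree⟩
      have hji : j < i := hp.lt_iff_lt.mp (by omega)
      have hgap := add_sub_le_of_strictMono hs hji.le
      have : (j : ℕ) < i := hji
      rcases ih j with h | h <;> omega

theorem shiftIter_eq_of_lt (hs : StrictMono s) {τ : ℕ} {i : Fin k} (hτ : s i < τ) :
    shiftIter s τ i = i := by
  have := val_le_of_strictMono (hs.shiftIter τ) i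
  rcases shiftIter_le_or_add_le hs τ i with h | h <;> omega

end Compaction

section RowCompaction

variable {m₁ m₂ r k : ℕ}

theorem exists_solvableIn_shiftIter (hr : r + 1 < m₂) {s : Fin k → ℕ}
    (hlt : ∀ i, s i < m₁) (τ : ℕ) :
    ∃ σ : Equiv.Perm (Fin m₁ × Fin m₂), SolvableIn (Grid2 m₁ m₂) 1 σ τ ∧
      (∀ i (v : Fin m₁ × Fin m₂), (v.1 : ℕ) = s i → (v.2 : ℕ) = r →
        ((σ v).1 : ℕ) = shiftIter s τ i ∧ (σ v).2 = v.2) ∧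
      ∀ v : Fin m₁ × Fin m₂, (v.2 : ℕ) ≠ r → (v.2 : ℕ) ≠ r + 1 → σ v = v := by
  induction τ with
  | zero => exact ⟨1, SolvableIn.refl 1, fun i v h₁ _ => ⟨h₁, rfl⟩, fun v _ _ => rfl⟩
  | succ τ ih =>
    obtain ⟨σ, hσ, htoken, hfix⟩ := ih
    set p := shiftIter s τ
    have hA : ∀ c, CanShift p c → 0 < c ∧ c < m₁ := by
      intro c hc
      obtain ⟨i, rfl⟩ := hc.1
      exact ⟨hc.pos, (shiftIter_le τ i).trans_lt (hlt i)⟩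
    set μ := rowPairRotation r hr (CanShift p) hA
    refine ⟨μ * σ, ?_, fun i v h₁ h₂ => ?_, fun v h₁ h₂ => ?_⟩
    · simpa using hσ.trans ((validMove_rowPairRotation ..).mul_right σ).solvableIn
    · obtain ⟨hcol, hrow⟩ := htoken i v h₁ h₂
      have hblocked : ¬ CanShift p ((σ v).1 + 1) := fun h => h.2 (by simp [hcol])
      obtain ⟨hcol', hrow'⟩ :=
        rowPairRotation_apply_of_row r hr _ hA (by rw [hrow, h₂]) hblocked
      rw [Equiv.Perm.mul_apply, hcol', hrow', hrow, shiftIter_succ, shiftStep, hcol]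
      exact ⟨rfl, rfl⟩
    · rw [Equiv.Perm.mul_apply, hfix v h₁ h₂, rowPairRotation_apply_of_ne r hr _ hA h₁ h₂]

def rowPrefix (m₁ m₂ r k : ℕ) : Finset (Fin m₁ × Fin m₂) :=
  {v | (v.2 : ℕ) = r ∧ (v.1 : ℕ) < k}

theorem card_rowPrefix_le : (rowPrefix m₁ m₂ r k).card ≤ k := by
  simpa using Finset.card_le_card_of_injOn (fun v => (v.1 : ℕ)) (t := Finset.range k)
    (fun v hv => by simp_all [rowPrefix])
    (fun u hu v hv h => Prod.ext (Fin.ext h) (Fin.ext (by simp_all [rowPrefix])))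

theorem exists_solvableIn_image_eq_rowPrefix (hr : r + 1 < m₂) (S : Finset (Fin m₁ × Fin m₂))
    (hS : ∀ v ∈ S, (v.2 : ℕ) = r) :
    ∃ σ : Equiv.Perm (Fin m₁ × Fin m₂), SolvableIn (Grid2 m₁ m₂) 1 σ m₁ ∧
      S.image σ = rowPrefix m₁ m₂ r S.card ∧
      ∀ v : Fin m₁ × Fin m₂, (v.2 : ℕ) ≠ r → (v.2 : ℕ) ≠ r + 1 → σ v = v := by
  set cols := S.image fun v => (v.1 : ℕ)
  have hcard : cols.card = S.card := Finset.card_image_of_injOn fun u hu v hv h =>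
    Prod.ext (Fin.ext h) (Fin.ext ((hS u hu).trans (hS v hv).symm))
  set s := cols.orderEmbOfFin hcard
  have hcols : ∀ i, ∃ v ∈ S, (v.1 : ℕ) = s i := fun i =>
    Finset.mem_image.mp (cols.orderEmbOfFin_mem hcard i)
  have hlt : ∀ i, s i < m₁ := fun i => by
    obtain ⟨v, -, hv⟩ := hcols i
    exact hv ▸ v.1.isLt
  obtain ⟨σ, hσ, htoken, hfix⟩ := exists_solvableIn_shiftIter (m₂ := m₂) hr hlt m₁
  refine ⟨σ, hσ, Finset.eq_of_subset_of_card_le (fun w hw => ?_) ?_, hfix⟩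
  · obtain ⟨v, hv, rfl⟩ := Finset.mem_image.mp hw
    obtain ⟨i, hi⟩ : (v.1 : ℕ) ∈ Set.range s := by
      rw [Finset.range_orderEmbOfFin]
      exact Finset.mem_image_of_mem _ hv
    obtain ⟨hcol, hrow⟩ := htoken i v hi.symm (hS v hv)
    rw [shiftIter_eq_of_lt s.strictMono (hlt i)] at hcol
    simp [rowPrefix, hcol, hrow, hS v hv]
  · rw [Finset.card_image_of_injective _ σ.injective]
    exact card_rowPrefix_le

end RowCompaction

/-- Rearrangement of indistinguishable robots within a row: on an `m₁ × m₂`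
grid, any set `S` of robots in row `r` can be sent onto any equal-sized target
set `T` in row `r` using `O(m₁)` moves, touching only rows `r` and `r+1`. -/
theorem row_rearrangement_linear_makespan :
    ∃ C : ℕ, ∀ m₁ m₂ : ℕ, 2 ≤ m₁ → 2 ≤ m₂ → ∀ r : ℕ, r + 2 ≤ m₂ →
      ∀ S T : Finset (Fin m₁ × Fin m₂),
        (∀ v ∈ S, (v.2 : ℕ) = r) → (∀ v ∈ T, (v.2 : ℕ) = r) →
        S.card = T.card →
        ∃ t ≤ C * m₁, ∃ σ : Equiv.Perm (Fin m₁ × Fin m₂),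
          SolvableIn (Grid2 m₁ m₂) 1 σ t ∧
          S.image (⇑σ) = T ∧
          (∀ v : Fin m₁ × Fin m₂, (v.2 : ℕ) ≠ r → (v.2 : ℕ) ≠ r + 1 → σ v = v) := by
  refine ⟨2, fun m₁ m₂ _ _ r hr S T hS hT hST => ?_⟩
  obtain ⟨σS, hσS, hSimage, hSfix⟩ := exists_solvableIn_image_eq_rowPrefix (by omega) S hS
  obtain ⟨σT, hσT, hTimage, hTfix⟩ := exists_solvableIn_image_eq_rowPrefix (by omega) T hT
  refine ⟨m₁ + m₁, by omega, σT⁻¹ * σS, ?_, ?_, fun v h₁ h₂ => ?_⟩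
  · have hback := hσT.symm.mul_right (σT⁻¹ * σS)
    rw [mul_inv_cancel_left, one_mul] at hback
    exact hσS.trans hback
  · rw [Equiv.Perm.coe_mul, ← Finset.image_image, hSimage, hST, ← hTimage, Finset.image_image]
    simp
  · rw [Equiv.Perm.mul_apply, hSfix v h₁ h₂, Equiv.Perm.inv_eq_iff_eq, hTfix v h₁ h₂]
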